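/- For all ordinals α > 0 and all ordinals β, ⟨α,β⟩_3 = α^β, where ^ is standard ordinal exponentiation. (The restriction α > 0 is needed because for α = 0 the supremum-based recursion yields ⟨0,β⟩_3 = 1 at limit ordinals β, differing from the standard convention 0^β = 0 for β > 0.) -/

import Mathlib

/-!
The recursion defining `⟨α, -⟩ₙ` only ever splits `β` as `cnfHead β + cnfTail β` and takes
suprema at limits. Hence any `f` that turns addition into `⟨-,-⟩ₙ₋₁` and is continuous at limits,
with the right values at `0` and `1`, coincides with `⟨α, -⟩ₙ`. Since `α * (a + b) = α * a + α * b`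
this gives `⟨α, β⟩₂ = α * β`, and then `α ^ (a + b) = α ^ a * α ^ b` gives `⟨α, β⟩₃ = α ^ β`;
continuity of `α ^ -` at limits is where `α ≠ 0` enters.
-/

open Ordinal

/-- The head of the Cantor Normal Form of `β` (for `β ≠ 0`): `ω ^ β₁`. -/
noncomputable def cnfHead (β : Ordinal) : Ordinal := ω ^ Ordinal.log ω β

/-- The tail of the Cantor Normal Form of `β`: `ω ^ β₂ + ⋯ + ω ^ β_k`. -/
noncomputable def cnfTail (β : Ordinal) : Ordinal := β - cnfHead β

theorem cnfHead_le {β : Ordinal} (hβ : β ≠ 0) : cnfHead β ≤ β :=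
  Ordinal.opow_log_le_self ω hβ

theorem cnfTail_lt {β : Ordinal} (hβ : β ≠ 0) : cnfTail β < β := by
  refine (Ordinal.sub_le_self β _).lt_of_ne fun h => ?_
  have h1 : cnfHead β + β = β := by
    have h2 := Ordinal.add_sub_cancel_of_le (cnfHead_le hβ)
    rwa [show β - cnfHead β = β from h] at h2
  have h2 : cnfHead β * ω ≤ β := Ordinal.add_eq_right_iff_mul_omega0_le.1 h1
  have h3 : β < ω ^ Order.succ (Ordinal.log ω β) :=
    Ordinal.lt_opow_succ_log_self Ordinal.one_lt_omega0 β
  rw [Ordinal.opow_succ] at h3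
  exact (not_le.2 (show β < cnfHead β * ω from h3)) h2

/-- Auxiliary step: given the previous operation `prev = ⟨-,-⟩_{n-1}` and the value `z`
at `β = 0`, produce `⟨α, -⟩_n` by transfinite recursion via the CNF of `β`. -/
noncomputable def ordOpAux (prev : Ordinal → Ordinal → Ordinal) (z : Ordinal)
    (α : Ordinal) : Ordinal → Ordinal :=
  WellFounded.fix Ordinal.lt_wf fun β IH =>
    if hβ0 : β = 0 then z                      -- k = 0
    else if β = 1 then α                       -- k = 1, β = 1
    else if hp : cnfHead β = β then            -- k = 1, β > 1 (additive principal limit)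
      ⨆ γ : Set.Iio β, IH γ.1 γ.2
    else                                       -- k ≥ 2
      prev (IH (cnfHead β) ((cnfHead_le hβ0).lt_of_ne hp))
           (IH (cnfTail β) (cnfTail_lt hβ0))

/-- The ordinal operations `⟨α, β⟩ₙ` of the paper (`n ≥ 1`; the value at `n = 0` is junk). -/
noncomputable def ordOp : ℕ → Ordinal → Ordinal → Ordinal
  | 0 => fun _ _ => 0
  | 1 => fun α β => α + β
  | 2 => fun α => ordOpAux (ordOp 1) 0 α
  | (n + 3) => fun α => ordOpAux (ordOp (n + 2)) 1 α

open Order Set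

theorem cnfHead_add_cnfTail {β : Ordinal} (hβ : β ≠ 0) : cnfHead β + cnfTail β = β :=
  Ordinal.add_sub_cancel_of_le (cnfHead_le hβ)

theorem isSuccLimit_of_cnfHead_eq {β : Ordinal} (h1 : β ≠ 1) (hp : cnfHead β = β) :
    IsSuccLimit β := by
  rw [← hp, cnfHead] at h1 ⊢
  refine isSuccLimit_opow_left isSuccLimit_omega0 fun h => h1 ?_
  rw [h, opow_zero]

section ordOpAux

variable (prev : Ordinal → Ordinal → Ordinal) (z α : Ordinal)

theorem ordOpAux_zero : ordOpAux prev z α 0 = z := by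
  rw [ordOpAux, WellFounded.fix_eq, dif_pos rfl]

theorem ordOpAux_one : ordOpAux prev z α 1 = α := by
  rw [ordOpAux, WellFounded.fix_eq, dif_neg one_ne_zero, if_pos rfl]

variable {prev z α}

theorem ordOpAux_of_cnfHead_eq {β : Ordinal} (h0 : β ≠ 0) (h1 : β ≠ 1) (hp : cnfHead β = β) :
    ordOpAux prev z α β = ⨆ γ : Iio β, ordOpAux prev z α γ.1 := by
  conv_lhs => rw [ordOpAux, WellFounded.fix_eq, dif_neg h0, if_neg h1, dif_pos hp]
  rfl

theorem ordOpAux_of_cnfHead_ne {β : Ordinal} (h0 : β ≠ 0) (h1 : β ≠ 1) (hp : cnfHead β ≠ β) :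
    ordOpAux prev z α β =
      prev (ordOpAux prev z α (cnfHead β)) (ordOpAux prev z α (cnfTail β)) := by
  conv_lhs => rw [ordOpAux, WellFounded.fix_eq, dif_neg h0, if_neg h1, dif_neg hp]
  rfl

theorem ordOpAux_eq_of_map_add {f : Ordinal → Ordinal} (hz : f 0 = z) (hα : f 1 = α)
    (hadd : ∀ a b, f (a + b) = prev (f a) (f b))
    (hlim : ∀ β, IsSuccLimit β → f β = ⨆ γ : Iio β, f γ.1) (β : Ordinal) :
    ordOpAux prev z α β = f β := by
  induction β using WellFoundedLT.induction with
  | _ β IH =>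
    rcases eq_or_ne β 0 with rfl | h0
    · rw [ordOpAux_zero, hz]
    rcases eq_or_ne β 1 with rfl | h1
    · rw [ordOpAux_one, hα]
    rcases eq_or_ne (cnfHead β) β with hp | hp
    · rw [ordOpAux_of_cnfHead_eq h0 h1 hp, hlim β (isSuccLimit_of_cnfHead_eq h1 hp)]
      exact iSup_congr fun γ => IH γ.1 γ.2
    · rw [ordOpAux_of_cnfHead_ne h0 h1 hp, IH _ ((cnfHead_le h0).lt_of_ne hp),
        IH _ (cnfTail_lt h0), ← hadd, cnfHead_add_cnfTail h0]

end ordOpAux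

theorem ordOp_two (α β : Ordinal) : ordOp 2 α β = α * β :=
  ordOpAux_eq_of_map_add (mul_zero α) (mul_one α) (mul_add α) (fun β hβ => by
    calc α * β = α * ⨆ γ : Iio β, γ.1 := by rw [hβ.iSup_Iio]
      _ = ⨆ γ : Iio β, α * γ.1 := mul_iSup α _) β

/-- For all ordinals `α > 0` and all ordinals `β`, we have `⟨α, β⟩₃ = α ^ β`,
where `^` is standard ordinal exponentiation. -/
theorem ordOp_three (α : Ordinal) (hα : 0 < α) (β : Ordinal) :
    ordOp 3 α β = α ^ β :=
  ordOpAux_eq_of_map_add (opow_zero α) (opow_one α)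
    (fun a b => by rw [opow_add, ordOp_two]) (fun _ => opow_limit hα.ne') β
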